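/- arXiv:2503.11823 — 5 statements merged into one kernel-verified Lean document; each statement's English description precedes it below -/
import Mathlib

section
/- Assume A, B, D have real entries with A = Aᵀ and D = Dᵀ. Let z ∈ ℂ with |z| = 1, and suppose (z+z⁻¹)·1_M − D is invertible and Q(z) and Q(z⁻¹) are invertible. Then the single-particle S-matrix 𝕊(z) := −Q(z⁻¹)·Q(z)⁻¹ is unitary: 𝕊(z)† · 𝕊(z) = 1_N. -/
open Matrix

/-- `F(z) := A + B† ((z+z⁻¹)·1_M − D)⁻¹ B`. -/
noncomputable def Fmat {N M : ℕ} (A : Matrix (Fin N) (Fin N) ℂ)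
    (B : Matrix (Fin M) (Fin N) ℂ) (D : Matrix (Fin M) (Fin M) ℂ) (z : ℂ) :
    Matrix (Fin N) (Fin N) ℂ :=
  A + Bᴴ * ((z + z⁻¹) • (1 : Matrix (Fin M) (Fin M) ℂ) - D)⁻¹ * B

/-- `Q(z) := 1_N − z·F(z)`. -/
noncomputable def Qmat {N M : ℕ} (A : Matrix (Fin N) (Fin N) ℂ)
    (B : Matrix (Fin M) (Fin N) ℂ) (D : Matrix (Fin M) (Fin M) ℂ) (z : ℂ) :
    Matrix (Fin N) (Fin N) ℂ :=
  1 - z • Fmat A B D z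

/-- `𝕊(z) := −Q(z⁻¹)·Q(z)⁻¹`. -/
noncomputable def Smat {N M : ℕ} (A : Matrix (Fin N) (Fin N) ℂ)
    (B : Matrix (Fin M) (Fin N) ℂ) (D : Matrix (Fin M) (Fin M) ℂ) (z : ℂ) :
    Matrix (Fin N) (Fin N) ℂ :=
  -(Qmat A B D z⁻¹) * (Qmat A B D z)⁻¹

/-! On the unit circle `z̄ = z⁻¹`, so `E = z + z⁻¹` is real and `F(z)` is Hermitian; moreover
`F(z⁻¹) = F(z)`. Hence `Q(z⁻¹) = Q(z)†`, and `Q(z)` is normal, being a polynomial in `F(z)`.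
For any invertible normal `Q`, the matrix `−Q†Q⁻¹` is unitary. -/

theorem Matrix.isHermitian_of_im_eq_zero {n : Type*} {X : Matrix n n ℂ}
    (hre : ∀ i j, (X i j).im = 0) (hsym : Xᵀ = X) : X.IsHermitian := by
  ext i j
  rw [conjTranspose_apply, ← congrFun₂ hsym i j, transpose_apply]
  exact Complex.conj_eq_iff_im.mpr (hre j i)

theorem Matrix.conjTranspose_mul_self_neg_conjTranspose_mul_inv {n α : Type*} [Fintype n]
    [DecidableEq n] [CommRing α] [StarRing α] {P : Matrix n n α} (hP : IsUnit P)
    (hPnormal : Commute P Pᴴ) : (-Pᴴ * P⁻¹)ᴴ * (-Pᴴ * P⁻¹) = 1 := by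
  have hPdet : IsUnit P.det := (isUnit_iff_isUnit_det P).mp hP
  have hPHdet : IsUnit Pᴴ.det := (isUnit_iff_isUnit_det _).mp ((isUnit_conjTranspose P).mpr hP)
  rw [conjTranspose_mul, conjTranspose_neg, conjTranspose_conjTranspose,
    conjTranspose_nonsing_inv]
  calc Pᴴ⁻¹ * -P * (-Pᴴ * P⁻¹) = Pᴴ⁻¹ * (P * Pᴴ) * P⁻¹ := by
        simp only [Matrix.mul_neg, Matrix.neg_mul, neg_neg, Matrix.mul_assoc]
    _ = Pᴴ⁻¹ * Pᴴ * (P * P⁻¹) := by rw [hPnormal.eq]; simp only [Matrix.mul_assoc]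
    _ = 1 := by rw [nonsing_inv_mul _ hPHdet, mul_nonsing_inv _ hPdet, Matrix.one_mul]

theorem commute_one_sub_smul {R A : Type*} [CommSemiring R] [Ring A] [Algebra R A]
    (x : A) (a b : R) : Commute (1 - a • x) (1 - b • x) :=
  have h : Commute (a • x) (b • x) := ((Commute.refl x).smul_left a).smul_right b
  (Commute.one_left _).sub_left ((Commute.one_right _).sub_right h)

section
variable {N M : ℕ} (A : Matrix (Fin N) (Fin N) ℂ) (B : Matrix (Fin M) (Fin N) ℂ)
  (D : Matrix (Fin M) (Fin M) ℂ)

theorem Fmat_inv (z : ℂ) : Fmat A B D z⁻¹ = Fmat A B D z := by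
  rw [Fmat, Fmat, inv_inv, add_comm z⁻¹]

theorem commute_Qmat_inv (z : ℂ) : Commute (Qmat A B D z) (Qmat A B D z⁻¹) := by
  rw [Qmat, Qmat, Fmat_inv]
  exact commute_one_sub_smul _ _ _

variable {A D}

theorem Fmat_isHermitian (hA : A.IsHermitian) (hD : D.IsHermitian) {z : ℂ}
    (hz : star z = z⁻¹) : (Fmat A B D z).IsHermitian := by
  have hE : star (z + z⁻¹) = z + z⁻¹ := by rw [star_add, star_inv₀, hz, inv_inv, add_comm]
  have hG : ((z + z⁻¹) • (1 : Matrix (Fin M) (Fin M) ℂ) - D)ᴴ = (z + z⁻¹) • 1 - D := by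
    rw [conjTranspose_sub, hD.eq, conjTranspose_smul, conjTranspose_one, hE]
  rw [IsHermitian, Fmat, conjTranspose_add, hA.eq, conjTranspose_mul, conjTranspose_mul,
    conjTranspose_nonsing_inv, hG, conjTranspose_conjTranspose, Matrix.mul_assoc]

theorem Qmat_conjTranspose (hA : A.IsHermitian) (hD : D.IsHermitian) {z : ℂ}
    (hz : star z = z⁻¹) : (Qmat A B D z)ᴴ = Qmat A B D z⁻¹ := by
  rw [Qmat, Qmat, Fmat_inv, conjTranspose_sub, conjTranspose_one, conjTranspose_smul,
    (Fmat_isHermitian B hA hD hz).eq, hz]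

end

theorem single_particle_S_matrix_unitary_general {N M : ℕ}
    (A : Matrix (Fin N) (Fin N) ℂ) (B : Matrix (Fin M) (Fin N) ℂ)
    (D : Matrix (Fin M) (Fin M) ℂ)
    (hAre : ∀ i j, (A i j).im = 0)
    (hDre : ∀ i j, (D i j).im = 0)
    (hAsym : Aᵀ = A) (hDsym : Dᵀ = D)
    (z : ℂ) (habs : ‖z‖ = 1)
    (hQ : IsUnit (Qmat A B D z)) :
    (Smat A B D z)ᴴ * Smat A B D z = 1 := by
  have hz : star z = z⁻¹ := (Complex.inv_eq_conj habs).symm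
  have hQH : (Qmat A B D z)ᴴ = Qmat A B D z⁻¹ :=
    Qmat_conjTranspose B (isHermitian_of_im_eq_zero hAre hAsym)
      (isHermitian_of_im_eq_zero hDre hDsym) hz
  rw [Smat, ← hQH]
  exact conjTranspose_mul_self_neg_conjTranspose_mul_inv hQ (hQH ▸ commute_Qmat_inv A B D z)

/-- for real symmetric blocks `A`, `D` and real `B`, and `|z| = 1`
with the relevant matrices invertible, the S-matrix `𝕊(z) = −Q(z⁻¹)Q(z)⁻¹` is
unitary: `𝕊(z)† 𝕊(z) = 1_N`. -/
theorem single_particle_S_matrix_unitary {N M : ℕ} (hN : 0 < N) (hM : 0 < M)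
    (A : Matrix (Fin N) (Fin N) ℂ) (B : Matrix (Fin M) (Fin N) ℂ)
    (D : Matrix (Fin M) (Fin M) ℂ)
    (hAre : ∀ i j, (A i j).im = 0) (hBre : ∀ i j, (B i j).im = 0)
    (hDre : ∀ i j, (D i j).im = 0)
    (hAsym : Aᵀ = A) (hDsym : Dᵀ = D)
    (z : ℂ) (habs : ‖z‖ = 1)
    (hD : IsUnit ((z + z⁻¹) • (1 : Matrix (Fin M) (Fin M) ℂ) - D))
    (hQ : IsUnit (Qmat A B D z)) (hQ' : IsUnit (Qmat A B D z⁻¹)) :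
    (Smat A B D z)ᴴ * Smat A B D z = 1 :=
  single_particle_S_matrix_unitary_general A B D hAre hDre hAsym hDsym z habs hQ
end

section
/- Suppose z ∈ ℂ, z ≠ 0, the matrix (z+z⁻¹)·1_M − D is invertible, and Q(z) and Q(z⁻¹) are invertible. Then z⁻¹·1_N + z·𝕊(z) = (z⁻¹ − z)·Q(z)⁻¹, where 𝕊(z) := −Q(z⁻¹)·Q(z)⁻¹. -/
open Matrix

/-- if `z ≠ 0`, `(z+z⁻¹)·1_M − D`, `Q(z)` and `Q(z⁻¹)` are invertible,
then `z⁻¹·1_N + z·𝕊(z) = (z⁻¹ − z)·Q(z)⁻¹`. -/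
theorem boundary_amplitudes {N M : ℕ} (hN : 0 < N) (hM : 0 < M)
    (A : Matrix (Fin N) (Fin N) ℂ) (B : Matrix (Fin M) (Fin N) ℂ)
    (D : Matrix (Fin M) (Fin M) ℂ) (z : ℂ) (hz : z ≠ 0)
    (hD : IsUnit ((z + z⁻¹) • (1 : Matrix (Fin M) (Fin M) ℂ) - D))
    (hQ : IsUnit (Qmat A B D z)) (hQ' : IsUnit (Qmat A B D z⁻¹)) :
    z⁻¹ • (1 : Matrix (Fin N) (Fin N) ℂ) + z • Smat A B D z =
      (z⁻¹ - z) • (Qmat A B D z)⁻¹ := by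
  have hF : Fmat A B D z⁻¹ = Fmat A B D z := by
    simp [Fmat, inv_inv, add_comm]
  have hQi : Qmat A B D z * (Qmat A B D z)⁻¹ = 1 :=
    Matrix.mul_nonsing_inv _ ((Matrix.isUnit_iff_isUnit_det _).mp hQ)
  have hz2 : z⁻¹ / z * z = z⁻¹ := by field_simp
  have ha : z * (z⁻¹ / z) = z⁻¹ := by field_simp
  have hb : z * (1 - z⁻¹ / z) = z - z⁻¹ := by
    rw [mul_sub, mul_one, ha]
  have hQ1 : Qmat A B D z⁻¹ = (1 - z⁻¹/z) • (1 : Matrix (Fin N) (Fin N) ℂ)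
      + (z⁻¹/z) • Qmat A B D z := by
    simp only [Qmat, hF, smul_sub, smul_smul, hz2]
    module
  rw [Smat, hQ1]
  simp only [neg_mul, add_mul, smul_mul_assoc, hQi, smul_neg, smul_add, smul_smul, ha, hb, one_mul]
  module
end

section
/- Let λ ∈ ℂ and β ∈ ℂ^M satisfy D·β = λ·β and B†·β = 0, and let x := (0, β) ∈ ℂ^{N+M} be the vector whose first N coordinates vanish and whose last M coordinates are β. Then γ(z)·x = −(z² − λz + 1)·x for every z ∈ ℂ. In particular, if z₀ ∈ ℂ, z₀ ≠ 0, satisfies z₀ + z₀⁻¹ = λ, then γ(z₀)·x = 0; and if moreover γ(z) is invertible and z ∉ {z₀, z₀⁻¹}, then γ(z)⁻¹·x = −((z − z₀)(z − z₀⁻¹))⁻¹·x. -/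
/-! `P_M` fixes `x = (0, β)`, and `H_G x = λx` because `B†β = 0` and `Dβ = λβ`; so `x` is an
eigenvector of every `γ(z)`, and of `γ(z)⁻¹` with the inverse eigenvalue. For `z₀ + z₀⁻¹ = λ` the
eigenvalue factors as `-(z - z₀)(z - z₀⁻¹)`. -/
open Matrix

/-- `H_G := [[A, B†],[B, D]]`, the adjacency matrix of the finite scattering graph. -/
def HGmat {N M : ℕ} (A : Matrix (Fin N) (Fin N) ℂ)
    (B : Matrix (Fin M) (Fin N) ℂ) (D : Matrix (Fin M) (Fin M) ℂ) :
    Matrix (Fin N ⊕ Fin M) (Fin N ⊕ Fin M) ℂ :=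
  fromBlocks A Bᴴ B D

/-- `P_M`, the diagonal projection onto the last `M` coordinates. -/
def PMmat (N M : ℕ) : Matrix (Fin N ⊕ Fin M) (Fin N ⊕ Fin M) ℂ :=
  fromBlocks 0 0 0 1

/-- `γ(z) := −z²·P_M + z·H_G − 1`. -/
def gammaMat {N M : ℕ} (A : Matrix (Fin N) (Fin N) ℂ)
    (B : Matrix (Fin M) (Fin N) ℂ) (D : Matrix (Fin M) (Fin M) ℂ) (z : ℂ) :
    Matrix (Fin N ⊕ Fin M) (Fin N ⊕ Fin M) ℂ :=
  -(z ^ 2) • PMmat N M + z • HGmat A B D - 1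

theorem Matrix.fromBlocks_mulVec_sum_elim_zero {l m n o R : Type*} [Fintype l] [Fintype m]
    [NonUnitalNonAssocSemiring R] (A : Matrix n l R) (B : Matrix n m R) (C : Matrix o l R)
    (D : Matrix o m R) (v : m → R) :
    fromBlocks A B C D *ᵥ Sum.elim 0 v = Sum.elim (B *ᵥ v) (D *ᵥ v) := by
  simp [fromBlocks_mulVec, Sum.elim_comp_inl, Sum.elim_comp_inr]

theorem Matrix.inv_mulVec_eq_inv_smul {n K : Type*} [Fintype n] [DecidableEq n] [Field K]
    {G : Matrix n n K} (hG : IsUnit G) {x : n → K} {c : K} (hx : G *ᵥ x = c • x) :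
    G⁻¹ *ᵥ x = c⁻¹ • x := by
  have hinv : G⁻¹ *ᵥ (c • x) = x := by
    rw [← hx, mulVec_mulVec, nonsing_inv_mul _ ((isUnit_iff_isUnit_det G).mp hG), one_mulVec]
  rcases eq_or_ne c 0 with rfl | hc
  · have hx0 : x = 0 := by simpa using hinv.symm
    simp [hx0]
  · rw [mulVec_smul] at hinv
    exact (eq_inv_smul_iff₀ hc).mpr hinv

section ConfinedBoundState

variable {N M : ℕ} {A : Matrix (Fin N) (Fin N) ℂ} {B : Matrix (Fin M) (Fin N) ℂ}
  {D : Matrix (Fin M) (Fin M) ℂ} {lam : ℂ} {β : Fin M → ℂ}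

theorem PMmat_mulVec_sum_elim_zero :
    PMmat N M *ᵥ Sum.elim (0 : Fin N → ℂ) β = Sum.elim (0 : Fin N → ℂ) β := by
  simp [PMmat, fromBlocks_mulVec_sum_elim_zero]

theorem HGmat_mulVec_sum_elim_zero (hβD : D *ᵥ β = lam • β) (hβB : Bᴴ *ᵥ β = 0) :
    HGmat A B D *ᵥ Sum.elim (0 : Fin N → ℂ) β = lam • Sum.elim (0 : Fin N → ℂ) β := by
  rw [HGmat, fromBlocks_mulVec_sum_elim_zero, hβB, hβD]
  ext (i | i) <;> simp

theorem gammaMat_mulVec_sum_elim_zero (hβD : D *ᵥ β = lam • β) (hβB : Bᴴ *ᵥ β = 0) (z : ℂ) :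
    gammaMat A B D z *ᵥ Sum.elim (0 : Fin N → ℂ) β =
      (-(z ^ 2 - lam * z + 1)) • Sum.elim (0 : Fin N → ℂ) β := by
  rw [gammaMat, sub_mulVec, add_mulVec, smul_mulVec, smul_mulVec,
    PMmat_mulVec_sum_elim_zero, HGmat_mulVec_sum_elim_zero hβD hβB, one_mulVec]
  module

end ConfinedBoundState

theorem sq_sub_mul_add_one_eq_of_add_inv_eq {z₀ lam : ℂ} (hz₀ : z₀ ≠ 0)
    (hlam : z₀ + z₀⁻¹ = lam) (z : ℂ) :
    z ^ 2 - lam * z + 1 = (z - z₀) * (z - z₀⁻¹) := by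
  rw [← hlam]
  linear_combination -(mul_inv_cancel₀ hz₀)

theorem confined_bound_state_gamma_general {N M : ℕ}
    (A : Matrix (Fin N) (Fin N) ℂ) (B : Matrix (Fin M) (Fin N) ℂ)
    (D : Matrix (Fin M) (Fin M) ℂ)
    (lam : ℂ) (β : Fin M → ℂ) (x : Fin N ⊕ Fin M → ℂ)
    (hβD : D.mulVec β = lam • β) (hβB : Bᴴ.mulVec β = 0)
    (hx : x = Sum.elim (fun _ => (0 : ℂ)) β) :
    (∀ z : ℂ, (gammaMat A B D z).mulVec x = (-(z ^ 2 - lam * z + 1)) • x) ∧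
    (∀ z₀ : ℂ, z₀ ≠ 0 → z₀ + z₀⁻¹ = lam →
      (gammaMat A B D z₀).mulVec x = 0 ∧
      (∀ z : ℂ, IsUnit (gammaMat A B D z) → z ≠ z₀ → z ≠ z₀⁻¹ →
        ((gammaMat A B D z)⁻¹).mulVec x =
          (-(((z - z₀) * (z - z₀⁻¹))⁻¹)) • x)) := by
  have hγ : ∀ z : ℂ, gammaMat A B D z *ᵥ x = (-(z ^ 2 - lam * z + 1)) • x := by
    subst hx
    exact gammaMat_mulVec_sum_elim_zero hβD hβB
  refine ⟨hγ, fun z₀ hz₀ hlam => ⟨?_, fun z hU _ _ => ?_⟩⟩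
  · rw [hγ, sq_sub_mul_add_one_eq_of_add_inv_eq hz₀ hlam, sub_self, zero_mul, neg_zero,
      zero_smul]
  · rw [inv_mulVec_eq_inv_smul hU (hγ z), sq_sub_mul_add_one_eq_of_add_inv_eq hz₀ hlam, inv_neg]

/-- if `D·β = λ·β` and `B†·β = 0`, the confined bound state
`x := (0, β)` satisfies `γ(z)·x = −(z² − λz + 1)·x` for all `z`; in particular
`γ(z₀)·x = 0` whenever `z₀ + z₀⁻¹ = λ`, and `γ(z)⁻¹·x = −((z−z₀)(z−z₀⁻¹))⁻¹·x`
whenever `γ(z)` is invertible and `z ∉ {z₀, z₀⁻¹}`. -/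
theorem confined_bound_state_gamma {N M : ℕ} (hN : 0 < N) (hM : 0 < M)
    (A : Matrix (Fin N) (Fin N) ℂ) (B : Matrix (Fin M) (Fin N) ℂ)
    (D : Matrix (Fin M) (Fin M) ℂ)
    (lam : ℂ) (β : Fin M → ℂ) (x : Fin N ⊕ Fin M → ℂ)
    (hβD : D.mulVec β = lam • β) (hβB : Bᴴ.mulVec β = 0)
    (hx : x = Sum.elim (fun _ => (0 : ℂ)) β) :
    (∀ z : ℂ, (gammaMat A B D z).mulVec x = (-(z ^ 2 - lam * z + 1)) • x) ∧
    (∀ z₀ : ℂ, z₀ ≠ 0 → z₀ + z₀⁻¹ = lam →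
      (gammaMat A B D z₀).mulVec x = 0 ∧
      (∀ z : ℂ, IsUnit (gammaMat A B D z) → z ≠ z₀ → z ≠ z₀⁻¹ →
        ((gammaMat A B D z)⁻¹).mulVec x =
          (-(((z - z₀) * (z - z₀⁻¹))⁻¹)) • x)) :=
  confined_bound_state_gamma_general A B D lam β x hβD hβB hx
end

section
/- For every z ∈ ℂ with z ≠ 0: γ(z⁻¹) = z⁻²·γ(z) + (z⁻² − 1)·P_N. Consequently, if γ(z) is invertible, then γ(z)⁻¹·P_N = z⁻²·1_{N+M} − z⁻¹·γ(z)⁻¹·(H_G − (z + z⁻¹)·1_{N+M}). -/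
open Matrix

/-- `P_N := 1 − P_M`, the diagonal projection onto the first `N` coordinates. -/
def PNmat (N M : ℕ) : Matrix (Fin N ⊕ Fin M) (Fin N ⊕ Fin M) ℂ :=
  1 - PMmat N M

/-- for `z ≠ 0`, `γ(z⁻¹) = z⁻²·γ(z) + (z⁻² − 1)·P_N`; hence if `γ(z)` is
invertible, `γ(z)⁻¹·P_N = z⁻²·1 − z⁻¹·γ(z)⁻¹·(H_G − (z + z⁻¹)·1)`. -/
theorem gamma_inv_PN {N M : ℕ} (hN : 0 < N) (hM : 0 < M)
    (A : Matrix (Fin N) (Fin N) ℂ) (B : Matrix (Fin M) (Fin N) ℂ)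
    (D : Matrix (Fin M) (Fin M) ℂ) (z : ℂ) (hz : z ≠ 0) :
    gammaMat A B D z⁻¹ = (z ^ 2)⁻¹ • gammaMat A B D z + ((z ^ 2)⁻¹ - 1) • PNmat N M ∧
    (IsUnit (gammaMat A B D z) →
      (gammaMat A B D z)⁻¹ * PNmat N M =
        (z ^ 2)⁻¹ • (1 : Matrix (Fin N ⊕ Fin M) (Fin N ⊕ Fin M) ℂ) -
          z⁻¹ • ((gammaMat A B D z)⁻¹ *
            (HGmat A B D - (z + z⁻¹) • (1 : Matrix (Fin N ⊕ Fin M) (Fin N ⊕ Fin M) ℂ)))) := by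

  have key : PNmat N M = (z ^ 2)⁻¹ • gammaMat A B D z -
      z⁻¹ • (HGmat A B D - (z + z⁻¹) • (1 : Matrix (Fin N ⊕ Fin M) (Fin N ⊕ Fin M) ℂ)) := by
    ext i j
    simp only [gammaMat, PNmat, PMmat, Matrix.sub_apply, Matrix.add_apply,
      Matrix.smul_apply, Matrix.one_apply, smul_eq_mul]
    rcases eq_or_ne i j with h | h <;> simp [h] <;> field_simp <;> ring
  constructor
  · ext i j
    simp only [gammaMat, PNmat, PMmat, Matrix.sub_apply, Matrix.add_apply,
      Matrix.smul_apply, Matrix.one_apply, smul_eq_mul]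
    rcases eq_or_ne i j with h | h <;> simp [h] <;> field_simp <;> ring
  · intro hu
    have hdet : IsUnit (gammaMat A B D z).det :=
      (Matrix.isUnit_iff_isUnit_det _).mp hu
    have hinv : (gammaMat A B D z)⁻¹ * gammaMat A B D z = 1 :=
      Matrix.nonsing_inv_mul _ hdet
    rw [key, Matrix.mul_sub, Matrix.mul_smul, Matrix.mul_smul, hinv]
end

section
/- Let M ≥ 1, n := 2 + M, and let H be an n×n symmetric complex matrix with H₀₀ = 0, H₁₁ = 0 and H₀₁ = 0 (indices 0 and 1 are the two boundary vertices attached to rails, and there is no edge between them). Let P : ℂⁿ → ℂⁿ be the coordinate projection onto the last M coordinates. Assume ((H²)₀₀ − 1)·((H²)₁₁ − 1) ≠ ((H²)₀₁)². Then there do not exist vectors x₀, x₁, x₂ ∈ ℂⁿ with x₀ ≠ 0, P·x₀ = 0, P·x₁ = H·x₀, and P·x₂ = H·x₁ − x₀. -/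
open Matrix

/-- let `H` be a symmetric `(2+M)×(2+M)` complex matrix with
`H₀₀ = H₁₁ = H₀₁ = 0` and `P` the coordinate projection onto the last `M`
coordinates. If `((H²)₀₀ − 1)((H²)₁₁ − 1) ≠ ((H²)₀₁)²` (i.e. `(d₁−1)(d₂−1) ≠ p₁₂²`),
then there is no Jordan chain of length `3` at infinity: no `x₀ ≠ 0, x₁, x₂` with
`P·x₀ = 0`, `P·x₁ = H·x₀` and `P·x₂ = H·x₁ − x₀`. -/
theorem no_jordan_chain_length_three {M : ℕ} (hM : 1 ≤ M)
    (H : Matrix (Fin (M + 2)) (Fin (M + 2)) ℂ) (hHsym : Hᵀ = H)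
    (h00 : H 0 0 = 0) (h11 : H 1 1 = 0) (h01 : H 0 1 = 0)
    (P : (Fin (M + 2) → ℂ) → (Fin (M + 2) → ℂ))
    (hP : ∀ (x : Fin (M + 2) → ℂ) (i : Fin (M + 2)),
      P x i = if 2 ≤ (i : ℕ) then x i else 0)
    (hcond : ((H * H) 0 0 - 1) * ((H * H) 1 1 - 1) ≠ ((H * H) 0 1) ^ 2) :
    ¬ ∃ (x₀ x₁ x₂ : Fin (M + 2) → ℂ), x₀ ≠ 0 ∧ P x₀ = 0 ∧
        P x₁ = H.mulVec x₀ ∧ P x₂ = H.mulVec x₁ - x₀ := by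
  rintro ⟨x₀, x₁, x₂, hx0ne, hPx0, hPx1, hPx2⟩
  have hzero01 : ((0 : Fin (M + 2)) : ℕ) = 0 := rfl
  have hone1 : ((1 : Fin (M + 2)) : ℕ) = 1 := by
    simp [Fin.val_one]
  have hne01 : (0 : Fin (M + 2)) ≠ 1 := by
    simp [Fin.ext_iff, hzero01, hone1]
  -- x₀ vanishes on coordinates ≥ 2
  have hx0zero : ∀ k : Fin (M + 2), 2 ≤ (k : ℕ) → x₀ k = 0 := by
    intro k hk
    have := congrFun hPx0 k
    rw [hP] at this
    simpa [hk] using this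
  -- small index dichotomy
  have hsmall : ∀ k : Fin (M + 2), ¬ 2 ≤ (k : ℕ) → k = 0 ∨ k = 1 := by
    intro k hk
    have hk2 : (k : ℕ) = 0 ∨ (k : ℕ) = 1 := by omega
    rcases hk2 with h | h
    · left; apply Fin.ext; simpa [hzero01] using h
    · right; apply Fin.ext; simpa [hone1] using h
  -- dot product with a vector supported on {0,1}
  have key : ∀ r : Fin (M + 2) → ℂ, r ⬝ᵥ x₀ = r 0 * x₀ 0 + r 1 * x₀ 1 := by
    intro r
    have hsub : ({0, 1} : Finset (Fin (M + 2))) ⊆ Finset.univ := Finset.subset_univ _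
    have := Finset.sum_subset hsub (f := fun j => r j * x₀ j)
      (by
        intro x _ hx
        simp only [Finset.mem_insert, Finset.mem_singleton, not_or] at hx
        have h2 : 2 ≤ (x : ℕ) := by
          by_contra h
          rcases hsmall x h with rfl | rfl
          · exact hx.1 rfl
          · exact hx.2 rfl
        show r x * x₀ x = 0
        rw [hx0zero x h2, mul_zero])
    rw [dotProduct, ← this, Finset.sum_pair hne01]
  have key0 : ∀ A : Matrix (Fin (M + 2)) (Fin (M + 2)) ℂ, ∀ i,
      A.mulVec x₀ i = A i 0 * x₀ 0 + A i 1 * x₀ 1 := by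
    intro A i; rw [mulVec]; exact key (A i)
  have h10 : H 1 0 = 0 := by
    have := congrFun (congrFun hHsym 0) 1
    simpa [transpose_apply, h01] using this
  -- boundary equations from P x₂
  have hbd : ∀ i : Fin (M + 2), ¬ 2 ≤ (i : ℕ) →
      H.mulVec x₁ i = x₀ i := by
    intro i hi
    have := congrFun hPx2 i
    rw [hP] at this
    simp only [hi, if_false, Pi.sub_apply] at this
    linear_combination -this
  -- H x₁ at index 0 and 1 equals (H²) x₀ there
  have hHx1 : ∀ i : Fin (M + 2), H i 0 = 0 → H i 1 = 0 →
      H.mulVec x₁ i = (H * H).mulVec x₀ i := by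
    intro i hi0 hi1
    have step : ∀ j : Fin (M + 2), H i j * x₁ j = H i j * H.mulVec x₀ j := by
      intro j
      by_cases hj : 2 ≤ (j : ℕ)
      · have := congrFun hPx1 j
        rw [hP] at this
        simp only [hj, if_true] at this
        rw [this]
      · rcases hsmall j hj with rfl | rfl
        · rw [hi0]; ring
        · rw [hi1]; ring
    calc H.mulVec x₁ i = ∑ j, H i j * x₁ j := rfl
      _ = ∑ j, H i j * H.mulVec x₀ j := by exact Finset.sum_congr rfl fun j _ => step j
      _ = H.mulVec (H.mulVec x₀) i := rfl
      _ = (H * H).mulVec x₀ i := by rw [← mulVec_mulVec]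
  set a := x₀ 0 with ha
  set b := x₀ 1 with hb
  set A := (H * H) 0 0 with hA
  set B := (H * H) 0 1 with hB
  set D := (H * H) 1 1 with hD
  have hB' : (H * H) 1 0 = B := by
    have hsym2 : (H * H)ᵀ = H * H := by rw [transpose_mul, hHsym]
    have := congrFun (congrFun hsym2 0) 1
    simpa [transpose_apply] using this
  have hnot0 : ¬ 2 ≤ ((0 : Fin (M + 2)) : ℕ) := by simp [hzero01]
  have hnot1 : ¬ 2 ≤ ((1 : Fin (M + 2)) : ℕ) := by simp [hone1]
  have eq1 : A * a + B * b = a := by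
    have := hbd 0 hnot0
    rw [hHx1 0 h00 h01, key0] at this
    simpa [hA, hB] using this
  have eq2 : B * a + D * b = b := by
    have := hbd 1 hnot1
    rw [hHx1 1 h10 h11, key0] at this
    rw [hB'] at this
    simpa [hD] using this
  -- determinant argument
  have e1 : (A - 1) * a + B * b = 0 := by linear_combination eq1
  have e2 : B * a + (D - 1) * b = 0 := by linear_combination eq2
  have hdet : (A - 1) * (D - 1) - B ^ 2 ≠ 0 := by
    intro h; apply hcond; linear_combination h
  have haz : a = 0 := by
    have : ((A - 1) * (D - 1) - B ^ 2) * a = 0 := by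
      linear_combination (D - 1) * e1 - B * e2
    exact (mul_eq_zero.mp this).resolve_left hdet
  have hbz : b = 0 := by
    have : ((A - 1) * (D - 1) - B ^ 2) * b = 0 := by
      linear_combination (A - 1) * e2 - B * e1
    exact (mul_eq_zero.mp this).resolve_left hdet
  apply hx0ne
  funext k
  by_cases hk : 2 ≤ (k : ℕ)
  · simpa using hx0zero k hk
  · rcases hsmall k hk with rfl | rfl
    · simpa [← ha] using haz
    · simpa [← hb] using hbz
end
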